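/- arXiv:1401.6024 — 7 statements merged into one kernel-verified Lean document; each statement's English description precedes it below -/
import Mathlib

section
/- Let D be an m×n real matrix whose column space of centered columns has dimension r−1 (i.e., the affine hull of the columns of D has affine dimension r−1). Then the affine hull of the columns of D contains at most 2^{r−1} vertices of the hypercube [0,1]^m, i.e., |aff(D) ∩ {0,1}^m| ≤ 2^{r−1}. -/
/-!
Let `W` be the direction of the affine hull. The coordinate functionals restricted to `W` span
its dual, so some `dim W` of them are already a basis. Two points of the affine hull that agree
on these coordinates differ by a vector of `W` that those functionals kill, so they are equal.
A vertex of the cube is therefore determined by its `0/1` values on `dim W` coordinates, which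
leaves at most `2 ^ dim W` vertices.
-/

open Matrix Module

section

variable {K ι : Type*} [Field K] [Finite ι]

theorem Submodule.exists_card_le_finrank_eq_zero_of_forall_coord_eq_zero
    (W : Submodule K (ι → K)) :
    ∃ s : Set ι, Nat.card s ≤ finrank K W ∧ ∀ w ∈ W, (∀ i ∈ s, w i = 0) → w = 0 := by
  let coord : ι → Dual K W := fun i => (LinearMap.proj i).comp W.subtype
  obtain ⟨κ, a, -, hspan, hli⟩ := exists_linearIndependent' K coord
  have := hli.finite
  have := Fintype.ofFinite κ
  have hcard : Nat.card κ ≤ finrank K W := by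
    simpa [Subspace.dual_finrank_eq] using hli.fintype_card_le_finrank
  refine ⟨Set.range a, (Finite.card_range_le a).trans hcard, fun w hw hs => ?_⟩
  have hker : Submodule.span K (Set.range (coord ∘ a)) ≤
      LinearMap.ker (Dual.eval K W ⟨w, hw⟩) := by
    rw [Submodule.span_le]
    rintro _ ⟨k, rfl⟩
    exact hs (a k) ⟨k, rfl⟩
  funext i
  have hi : coord i ∈ Submodule.span K (Set.range (coord ∘ a)) :=
    hspan ▸ Submodule.subset_span ⟨i, rfl⟩
  exact hker hi

theorem AffineSubspace.ncard_le_ncard_pow_finrank_direction (A : AffineSubspace K (ι → K))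
    {T : Set K} (hT : T.Finite) (hT₀ : T.Nonempty) {S : Set (ι → K)}
    (hSA : S ⊆ A) (hST : ∀ x ∈ S, ∀ i, x i ∈ T) :
    S.ncard ≤ T.ncard ^ finrank K A.direction := by
  obtain ⟨s, hs, hzero⟩ := A.direction.exists_card_le_finrank_eq_zero_of_forall_coord_eq_zero
  have := hT.to_subtype
  let restrict : S → (s → T) := fun x i => ⟨x.1 i, hST x x.2 i⟩
  have hinj : Function.Injective restrict := by
    intro x y hxy
    have hdiff := hzero _ (A.vsub_mem_direction (hSA x.2) (hSA y.2)) fun i hi => by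
      simpa [sub_eq_zero, restrict] using congrArg (fun f => (f ⟨i, hi⟩ : K)) hxy
    exact Subtype.ext (sub_eq_zero.mp hdiff)
  calc S.ncard = Nat.card S := (Nat.card_coe_set_eq S).symm
    _ ≤ Nat.card (s → T) := Nat.card_le_card_of_injective restrict hinj
    _ = T.ncard ^ Nat.card s := by rw [Nat.card_fun, Nat.card_coe_set_eq]
    _ ≤ T.ncard ^ finrank K A.direction :=
      Nat.pow_le_pow_right (Set.ncard_pos hT |>.mpr hT₀) hs

end

theorem Matrix.of_sub_const_mulVec_of_sum_eq_one {m n R : Type*} [Fintype n] [CommRing R]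
    (D : Matrix m n R) (p : m → R) {θ : n → R} (hθ : ∑ j, θ j = 1) :
    (of fun i j => D i j - p i) *ᵥ θ = D *ᵥ θ - p := by
  ext i
  simp [mulVec, dotProduct, sub_mul, Finset.sum_sub_distrib, ← Finset.mul_sum, hθ]

theorem affine_hull_at_most_two_pow_vertices_general
    (m n r : ℕ) (D : Matrix (Fin m) (Fin n) ℝ)
    (p : Fin m → ℝ)
    (hrank : (Matrix.of (fun i j => D i j - p i)).rank = r - 1) :
    {x : Fin m → ℝ | (∃ θ : Fin n → ℝ, ∑ j, θ j = 1 ∧ D.mulVec θ = x) ∧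
      ∀ i, x i = 0 ∨ x i = 1}.ncard ≤ 2 ^ (r - 1) := by
  let A := AffineSubspace.mk' p (LinearMap.range (of fun i j => D i j - p i).mulVecLin)
  refine (A.ncard_le_ncard_pow_finrank_direction (T := {0, 1}) (Set.toFinite _) ⟨0, by simp⟩
    ?_ fun x hx => hx.2).trans_eq ?_
  · rintro _ ⟨⟨θ, hθ, rfl⟩, -⟩
    exact AffineSubspace.mem_mk'.mpr ⟨θ, D.of_sub_const_mulVec_of_sum_eq_one p hθ⟩
  · rw [Set.ncard_pair zero_ne_one, AffineSubspace.direction_mk']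
    exact congrArg (2 ^ ·) hrank

theorem affine_hull_at_most_two_pow_vertices
    (m n r : ℕ) (hr : 1 ≤ r) (D : Matrix (Fin m) (Fin n) ℝ)
    (p : Fin m → ℝ)
    (hp : ∃ θ : Fin n → ℝ, ∑ j, θ j = 1 ∧ D.mulVec θ = p)
    (hrank : (Matrix.of (fun i j => D i j - p i)).rank = r - 1) :
    {x : Fin m → ℝ | (∃ θ : Fin n → ℝ, ∑ j, θ j = 1 ∧ D.mulVec θ = x) ∧
      ∀ i, x i = 0 ∨ x i = 1}.ncard ≤ 2 ^ (r - 1) :=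
  affine_hull_at_most_two_pow_vertices_general m n r D p hrank
end

section
/- (Discrete Littlewood–Offord) Let a₁, ..., a_ℓ be nonzero real numbers and y ∈ ℝ. Then the number of vectors b ∈ {0,1}^ℓ with Σᵢ aᵢbᵢ = y is at most C(ℓ, ⌊ℓ/2⌋). -/
/-!
Erdős's argument. Complementing the coordinates with negative weight `aᵢ` turns the sum into
`∑_{i ∈ t} |aᵢ|` plus a constant, so the solutions become a level set of a sum with positive
weights. Such a level set is an antichain under inclusion, since enlarging `t` strictly increases
the sum, and Sperner's theorem bounds its size by `C(ℓ, ⌊ℓ/2⌋)`.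
-/

open Finset
open scoped symmDiff

variable {ι M : Type*}

theorem Finset.isAntichain_setOf_sum_eq [AddCommMonoid M] [PartialOrder M]
    [IsOrderedCancelAddMonoid M] {w : ι → M} (hw : ∀ i, 0 < w i) (y : M) :
    IsAntichain (· ⊆ ·) {s : Finset ι | ∑ i ∈ s, w i = y} := by
  intro s hs t ht hne hst
  obtain ⟨i, hit, his⟩ := exists_of_ssubset (hst.ssubset_of_ne hne)
  have hlt := sum_lt_sum_of_subset hst hit his (hw i) fun j _ _ => (hw j).le
  exact hlt.ne (hs.trans ht.symm)

theorem Finset.card_filter_sum_eq_le_choose_of_pos [AddCommMonoid M] [PartialOrder M]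
    [IsOrderedCancelAddMonoid M] [DecidableEq M] [Fintype ι] {w : ι → M} (hw : ∀ i, 0 < w i)
    (y : M) :
    #{s : Finset ι | ∑ i ∈ s, w i = y} ≤ (Fintype.card ι).choose (Fintype.card ι / 2) :=
  IsAntichain.sperner (by simpa using isAntichain_setOf_sum_eq hw y)

theorem Finset.sum_eq_sum_symmDiff_abs_add [AddCommGroup M] [LinearOrder M] [IsOrderedAddMonoid M]
    [Fintype ι] [DecidableEq ι] (a : ι → M) (s : Finset ι) :
    ∑ i ∈ s, a i = ∑ i ∈ s ∆ ({i | a i < 0} : Finset ι), |a i| + ∑ i with a i < 0, a i := by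
  rw [← sum_ite_mem_eq s, ← sum_ite_mem_eq (s ∆ _), sum_filter, ← sum_add_distrib]
  refine sum_congr rfl fun i _ => ?_
  by_cases hi : a i < 0
  · by_cases hs : i ∈ s <;> simp [mem_symmDiff, hi, hs, abs_of_neg hi]
  · by_cases hs : i ∈ s <;> simp [mem_symmDiff, hi, hs, abs_of_nonneg (not_lt.mp hi)]

theorem Finset.card_filter_sum_eq_le_choose [AddCommGroup M] [LinearOrder M]
    [IsOrderedAddMonoid M] [Fintype ι] {a : ι → M} (ha : ∀ i, a i ≠ 0) (y : M) :
    #{s : Finset ι | ∑ i ∈ s, a i = y} ≤ (Fintype.card ι).choose (Fintype.card ι / 2) := by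
  classical
  set N : Finset ι := {i | a i < 0}
  calc #{s : Finset ι | ∑ i ∈ s, a i = y}
      ≤ #{t : Finset ι | ∑ i ∈ t, |a i| = y - ∑ i ∈ N, a i} := by
        refine card_le_card_of_injOn (· ∆ N) (fun s hs => ?_) (symmDiff_left_injective N).injOn
        simp only [coe_filter, mem_univ, true_and, Set.mem_ofPred_eq] at hs ⊢
        rw [← hs, sum_eq_sum_symmDiff_abs_add a s, add_sub_cancel_right]
    _ ≤ (Fintype.card ι).choose (Fintype.card ι / 2) :=
        card_filter_sum_eq_le_choose_of_pos (fun i => abs_pos.mpr (ha i)) _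

theorem discrete_littlewood_offord
    (ℓ : ℕ) (a : Fin ℓ → ℝ) (ha : ∀ i, a i ≠ 0) (y : ℝ) :
    {b : Fin ℓ → Bool | ∑ i, a i * (if b i then 1 else 0) = y}.ncard ≤
      Nat.choose ℓ (ℓ / 2) := by
  classical
  have hsupport_inj : Function.Injective fun b : Fin ℓ → Bool => ({i | b i} : Finset (Fin ℓ)) :=
    fun b b' h => funext fun i => by simpa using congrArg (i ∈ ·) h
  calc _ ≤ (#{s : Finset (Fin ℓ) | ∑ i ∈ s, a i = y} : ℕ) := by
        rw [← Set.ncard_coe_finset]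
        refine Set.ncard_le_ncard_of_injOn _ (fun b hb => ?_) hsupport_inj.injOn
        simpa [sum_filter] using hb
    _ ≤ ℓ.choose (ℓ / 2) := by
        simpa using card_filter_sum_eq_le_choose ha y
end

section
/- (Continuous Littlewood–Offord) Let a₁, ..., a_ℓ be real numbers with |aᵢ| ≥ 1 for all i, and let y ∈ ℝ. Then the number of vectors b ∈ {0,1}^ℓ with Σᵢ aᵢbᵢ ∈ (y, y+1) is at most C(ℓ, ⌊ℓ/2⌋). -/
/-!
Erdős' argument. Flipping the coordinates `i` with `a i < 0` shifts every sum by the same constant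
and replaces `a` by `|a|`, so the sum attached to `b` becomes `∑ i ∈ T, |a i|` plus a constant,
where `T` is the set of coordinates on which `b` disagrees with the sign pattern of `a`. If `T ⊂ T'`
the two sums differ by at least `1`, so they cannot both lie in an open interval of length `1`: the
sets `T` coming from such `b` form an antichain, and Sperner's theorem bounds their number.
-/

open Finset

namespace LittlewoodOfford

variable {ι : Type*}

theorem sum_abs_add_one_le_of_ssubset {a : ι → ℝ} (ha : ∀ i, 1 ≤ |a i|) {s t : Finset ι}
    (hst : s ⊂ t) : ∑ i ∈ s, |a i| + 1 ≤ ∑ i ∈ t, |a i| := by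
  classical
  obtain ⟨i, hit, his⟩ := exists_of_ssubset hst
  calc ∑ i ∈ s, |a i| + 1 ≤ ∑ i ∈ s, |a i| + ∑ i ∈ t \ s, |a i| := by
        gcongr
        exact (ha i).trans (single_le_sum (fun j _ => abs_nonneg (a j)) (mem_sdiff.2 ⟨hit, his⟩))
    _ = ∑ i ∈ t, |a i| := by rw [add_comm, sum_sdiff hst.subset]

variable [Fintype ι]

noncomputable def signedSupport (a : ι → ℝ) (b : ι → Bool) : Finset ι :=
  {i | b i ≠ decide (a i < 0)}

theorem signedSupport_injective (a : ι → ℝ) : Function.Injective (signedSupport a) := by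
  intro b b' h
  funext i
  have hi := Finset.ext_iff.mp h i
  simp only [signedSupport, mem_filter, mem_univ, true_and] at hi
  revert hi
  generalize decide (a i < 0) = d
  cases b i <;> cases b' i <;> cases d <;> simp

theorem sum_mul_ite_eq_sum_signedSupport_abs_add (a : ι → ℝ) (b : ι → Bool) :
    ∑ i, a i * (if b i then 1 else 0) =
      ∑ i ∈ signedSupport a b, |a i| + ∑ i with a i < 0, a i := by
  rw [signedSupport, sum_filter, sum_filter, ← sum_add_distrib]
  refine sum_congr rfl fun i _ => ?_
  rcases lt_or_ge (a i) 0 with hneg | hnonneg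
  · cases b i <;> simp [hneg, abs_of_neg hneg]
  · cases b i <;> simp [hnonneg.not_gt, abs_of_nonneg hnonneg]

theorem isAntichain_image_signedSupport {a : ι → ℝ} (ha : ∀ i, 1 ≤ |a i|) (y : ℝ) :
    IsAntichain (· ⊆ ·)
      (signedSupport a '' {b | ∑ i, a i * (if b i then 1 else 0) ∈ Set.Ioo y (y + 1)}) := by
  rintro _ ⟨b, ⟨hby, -⟩, rfl⟩ _ ⟨b', ⟨-, hb'y⟩, rfl⟩ hne hsub
  have hgap := sum_abs_add_one_le_of_ssubset ha (hsub.ssubset_of_ne hne)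
  rw [sum_mul_ite_eq_sum_signedSupport_abs_add] at hby hb'y
  linarith

theorem ncard_sum_mem_Ioo_le_choose [DecidableEq ι] {a : ι → ℝ} (ha : ∀ i, 1 ≤ |a i|) (y : ℝ) :
    {b : ι → Bool | ∑ i, a i * (if b i then 1 else 0) ∈ Set.Ioo y (y + 1)}.ncard ≤
      (Fintype.card ι).choose (Fintype.card ι / 2) := by
  set S := {b : ι → Bool | ∑ i, a i * (if b i then 1 else 0) ∈ Set.Ioo y (y + 1)}
  have hanti : IsAntichain (· ⊆ ·) (S.toFinset.image (signedSupport a) : Set (Finset ι)) := by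
    rw [coe_image, Set.coe_toFinset]
    exact isAntichain_image_signedSupport ha y
  calc S.ncard = (S.toFinset.image (signedSupport a)).card := by
        rw [card_image_of_injective _ (signedSupport_injective a), Set.ncard_eq_toFinset_card']
    _ ≤ _ := hanti.sperner

end LittlewoodOfford

theorem continuous_littlewood_offord
    (ℓ : ℕ) (a : Fin ℓ → ℝ) (ha : ∀ i, 1 ≤ |a i|) (y : ℝ) :
    {b : Fin ℓ → Bool | ∑ i, a i * (if b i then 1 else 0) ∈ Set.Ioo y (y + 1)}.ncard ≤
      Nat.choose ℓ (ℓ / 2) := by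
  simpa using LittlewoodOfford.ncard_sum_mem_Ioo_le_choose ha y
end

section
/- Let T ∈ {0,1}^{m×r} be the matrix whose first m−r rows are zero, whose next r−1 rows form [I_{r−1}, 0_{r−1}], and whose last row is zero. Then aff(T) ∩ {0,1}^m has exactly 2^{r−1} elements, namely all vectors Tλ where λ₁,...,λ_{r−1} ∈ {0,1} and λ_r = 1 − Σ_{k<r} λ_k. -/
/-!
`T λ` is `(λ₁, …, λ_{r-1})` placed on the middle rows and extended by zero, and since the last
column of `T` is zero, the weight missing from `∑ λ = 1` can always be put on `λ_r`. Hence the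
affine hull of the columns is the image of extension by zero along the middle rows, its `0/1`
points are the extensions of the `0/1` vectors of length `r - 1`, and extension by zero is
injective.
-/

open Matrix Function

section ExtendByZero

variable {α β γ : Type*}

lemma forall_extend_zero_mem_iff [Zero γ] {f : α → β} (hf : Injective f) {s : Set γ}
    (hs : 0 ∈ s) (w : α → γ) : (∀ i, extend f w 0 i ∈ s) ↔ ∀ a, w a ∈ s := by
  refine ⟨fun h a => hf.extend_apply w 0 a ▸ h (f a), fun h i => ?_⟩
  by_cases hi : ∃ a, f a = i
  · obtain ⟨a, rfl⟩ := hi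
    rw [hf.extend_apply]
    exact h a
  · rw [extend_apply' _ _ _ hi]
    exact hs

variable {R : Type*} [CommRing R] [Fintype γ] [DecidableEq γ]

lemma mulVec_eq_extend {f : α → β} (hf : Injective f) (g : α → γ) {M : Matrix β γ R}
    (h_row : ∀ a, M (f a) = Pi.single (g a) 1) (h_zero : ∀ i ∉ Set.range f, M i = 0)
    (v : γ → R) : M *ᵥ v = extend f (v ∘ g) 0 := by
  funext i
  by_cases hi : ∃ a, f a = i
  · obtain ⟨a, rfl⟩ := hi
    rw [hf.extend_apply, mulVec, h_row, single_dotProduct, one_mul, Function.comp_apply]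
  · rw [extend_apply' _ _ _ hi, mulVec, h_zero i hi, zero_dotProduct, Pi.zero_apply]

lemma range_mulVec_eq_range_extend {f : α → β} (hf : Injective f) {g : α → γ}
    (hg : Injective g) {M : Matrix β γ R}
    (h_row : ∀ a, M (f a) = Pi.single (g a) 1) (h_zero : ∀ i ∉ Set.range f, M i = 0) :
    Set.range M.mulVec = Set.range fun w : α → R => extend f w 0 := by
  ext x
  constructor
  · rintro ⟨v, rfl⟩
    exact ⟨v ∘ g, (mulVec_eq_extend hf g h_row h_zero v).symm⟩
  · rintro ⟨w, rfl⟩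
    exact ⟨extend g w 0, by rw [mulVec_eq_extend hf g h_row h_zero, extend_comp hg]⟩

end ExtendByZero

lemma exists_sum_eq_one_mulVec_eq_iff {β γ R : Type*} [CommRing R] [Fintype γ] [DecidableEq γ]
    {M : Matrix β γ R} {c : γ} (hc : ∀ i, M i c = 0) (x : β → R) :
    (∃ lam : γ → R, ∑ k, lam k = 1 ∧ M *ᵥ lam = x) ↔ x ∈ Set.range M.mulVec := by
  refine ⟨fun ⟨lam, _, hx⟩ => ⟨lam, hx⟩, ?_⟩
  rintro ⟨v, rfl⟩
  refine ⟨v + Pi.single c (1 - ∑ k, v k), ?_, ?_⟩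
  · simp [Finset.sum_add_distrib]
  · ext i
    simp [mulVec_add, hc]

lemma Fin.sum_univ_eq_sum_filter_add_last {M : Type*} [AddCommMonoid M] {r : ℕ} (hr : 1 ≤ r)
    (f : Fin r → M) :
    ∑ k, f k = ∑ k ∈ Finset.univ.filter (fun k : Fin r => (k : ℕ) < r - 1), f k
      + f ⟨r - 1, by omega⟩ := by
  rw [← Finset.sum_filter_add_sum_filter_not Finset.univ (fun k : Fin r => (k : ℕ) < r - 1)]
  congr 1
  convert Finset.sum_singleton f _
  ext k
  simp only [Finset.mem_filter, Finset.mem_univ, true_and, not_lt, Finset.mem_singleton]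
  exact ⟨fun h => Fin.ext (by have := k.isLt; show (k : ℕ) = r - 1; omega), fun h => by simp [h]⟩

section FaceExample

variable {m r : ℕ}

def middleRow (hmr : r ≤ m) (j : Fin (r - 1)) : Fin m := ⟨m - r + j, by omega⟩

lemma middleRow_injective (hmr : r ≤ m) : Injective (middleRow hmr) := fun j j' h => by
  simp only [middleRow, Fin.mk.injEq] at h
  exact Fin.ext (by omega)

variable {T : Matrix (Fin m) (Fin r) ℝ}

lemma row_middleRow
    (hT : ∀ i k, T i k = if (i : ℕ) = m - r + (k : ℕ) ∧ (k : ℕ) < r - 1 then 1 else 0)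
    (hmr : r ≤ m) (j : Fin (r - 1)) :
    T (middleRow hmr j) = Pi.single (Fin.castLE (Nat.sub_le r 1) j) 1 := by
  ext k
  simp only [hT, middleRow, Pi.single_apply, Fin.ext_iff, Fin.val_castLE]
  congr 1
  apply propext
  omega

lemma row_eq_zero_of_not_mem_range_middleRow
    (hT : ∀ i k, T i k = if (i : ℕ) = m - r + (k : ℕ) ∧ (k : ℕ) < r - 1 then 1 else 0)
    (hmr : r ≤ m) (i : Fin m) (hi : i ∉ Set.range (middleRow hmr)) : T i = 0 := by
  ext k
  rw [hT, Pi.zero_apply, if_neg]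
  rintro ⟨hik, hk⟩
  exact hi ⟨⟨k, hk⟩, Fin.ext (by simp [middleRow, hik])⟩

lemma setOf_vertex_mem_affineHull_eq_image
    (hT : ∀ i k, T i k = if (i : ℕ) = m - r + (k : ℕ) ∧ (k : ℕ) < r - 1 then 1 else 0)
    (hr : 1 ≤ r) (hmr : r ≤ m) :
    {x : Fin m → ℝ | (∃ lam : Fin r → ℝ, ∑ k, lam k = 1 ∧ T.mulVec lam = x) ∧
        ∀ i, x i = 0 ∨ x i = 1}
      = (fun w => extend (middleRow hmr) w 0) ''
          ↑(Fintype.piFinset fun _ : Fin (r - 1) => ({0, 1} : Finset ℝ)) := by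
  have h_last : ∀ i, T i ⟨r - 1, by omega⟩ = 0 := by simp [hT]
  have h_vertex := forall_extend_zero_mem_iff (middleRow_injective hmr) (s := {(0 : ℝ), 1})
    (Or.inl rfl)
  simp only [Fintype.coe_piFinset, Finset.coe_insert, Finset.coe_singleton]
  ext x
  rw [Set.mem_ofPred_eq, exists_sum_eq_one_mulVec_eq_iff h_last,
    range_mulVec_eq_range_extend (middleRow_injective hmr) (Fin.castLE_injective _)
      (row_middleRow hT hmr) (row_eq_zero_of_not_mem_range_middleRow hT hmr)]
  constructor
  · rintro ⟨⟨w, rfl⟩, hw⟩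
    exact ⟨w, fun j _ => (h_vertex w).1 hw j, rfl⟩
  · rintro ⟨w, hw, rfl⟩
    exact ⟨⟨w, rfl⟩, (h_vertex w).2 fun j => hw j trivial⟩

end FaceExample

theorem face_example_attains_bound
    (m r : ℕ) (hr : 1 ≤ r) (hmr : r ≤ m)
    (T : Matrix (Fin m) (Fin r) ℝ)
    (hT : ∀ i k, T i k = if (i : ℕ) = m - r + (k : ℕ) ∧ (k : ℕ) < r - 1 then 1 else 0) :
    {x : Fin m → ℝ | (∃ lam : Fin r → ℝ, ∑ k, lam k = 1 ∧ T.mulVec lam = x) ∧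
        ∀ i, x i = 0 ∨ x i = 1}
      = {x | ∃ lam : Fin r → ℝ,
          (∀ k : Fin r, (k : ℕ) < r - 1 → (lam k = 0 ∨ lam k = 1)) ∧
          lam ⟨r - 1, by omega⟩ =
            1 - ∑ k ∈ Finset.univ.filter (fun k : Fin r => (k : ℕ) < r - 1), lam k ∧
          x = T.mulVec lam} ∧
    {x : Fin m → ℝ | (∃ lam : Fin r → ℝ, ∑ k, lam k = 1 ∧ T.mulVec lam = x) ∧
        ∀ i, x i = 0 ∨ x i = 1}.ncard = 2 ^ (r - 1) := by
  have h_inj := middleRow_injective hmr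
  have h_mulVec := mulVec_eq_extend h_inj _ (row_middleRow hT hmr)
    (row_eq_zero_of_not_mem_range_middleRow hT hmr)
  have h_vertex := forall_extend_zero_mem_iff h_inj (s := {(0 : ℝ), 1}) (Or.inl rfl)
  refine ⟨Set.ext fun x => ⟨?_, ?_⟩, ?_⟩
  · rintro ⟨⟨lam, h_sum, rfl⟩, hx⟩
    refine ⟨lam, fun k hk => ?_, ?_, rfl⟩
    · simpa [h_mulVec, h_inj.extend_apply] using hx (middleRow hmr ⟨k, hk⟩)
    · rw [Fin.sum_univ_eq_sum_filter_add_last hr] at h_sum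
      linarith
  · rintro ⟨lam, h_bin, h_last, rfl⟩
    refine ⟨⟨lam, by rw [Fin.sum_univ_eq_sum_filter_add_last hr, h_last]; ring, rfl⟩, ?_⟩
    rw [h_mulVec]
    exact (h_vertex _).2 fun j => h_bin _ j.isLt
  · rw [setOf_vertex_mem_affineHull_eq_image hT hr hmr,
      Set.ncard_image_of_injective _ (extend_injective h_inj 0), Set.ncard_coe_finset,
      Fintype.card_piFinset]
    simp
end

section
/- Suppose aff(D) ∩ {0,1}^m = {T_{:,1}, ..., T_{:,r}} where T has affinely independent columns (uniqueness condition). If there exist T' ∈ {0,1}^{m×r} and A' ∈ ℝ₊^{r×n} with A'ᵀ𝟙_r = 𝟙_n and D = T'A' with T' having affinely independent columns, then the columns of T' are a permutation of the columns of T. -/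
/-!
Since `A'` has full row rank `r`, every unit vector `eₖ` is `A' θ` for some `θ`, and the column sums
of `A'` being `1` force `∑ θ = 1`; hence column `k` of `T'` equals `T' A' θ = D θ`, a binary point of
`aff(D)`, i.e. a column of `T`. Affine independence makes the columns of `T'` pairwise distinct, so
`k ↦` (index of the matching column of `T`) is an injection of `Fin r` into itself, i.e. a permutation.
-/

open Matrix

namespace Matrix

variable {ι κ R : Type*}

theorem sum_mulVec_of_sum_col_eq_one [Fintype ι] [Fintype κ] [NonAssocSemiring R]
    {A : Matrix ι κ R} (hA : ∀ j, ∑ k, A k j = 1) (θ : κ → R) :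
    ∑ k, (A *ᵥ θ) k = ∑ j, θ j := by
  simp only [mulVec, dotProduct]
  rw [Finset.sum_comm]
  simp_rw [← Finset.sum_mul, hA, one_mul]

theorem mulVec_surjective_of_rank_eq_card [Fintype ι] [Fintype κ] [Field R]
    {A : Matrix ι κ R} (hA : A.rank = Fintype.card ι) : Function.Surjective A.mulVec := by
  change Function.Surjective A.mulVecLin
  rw [← LinearMap.range_eq_top]
  apply Submodule.eq_top_of_finrank_eq
  rw [← Matrix.rank, hA, Module.finrank_fintype_fun_eq_card]

theorem exists_sum_eq_one_mulVec_eq_col [Fintype ι] [Fintype κ] [DecidableEq ι] {μ : Type*}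
    [Field R] {T : Matrix μ ι R} {A : Matrix ι κ R} (hA : ∀ j, ∑ k, A k j = 1)
    (hrank : A.rank = Fintype.card ι) (k : ι) :
    ∃ θ : κ → R, ∑ j, θ j = 1 ∧ (T * A) *ᵥ θ = T.col k := by
  obtain ⟨θ, hθ⟩ := mulVec_surjective_of_rank_eq_card hrank (Pi.single k 1)
  refine ⟨θ, ?_, ?_⟩
  · rw [← sum_mulVec_of_sum_col_eq_one hA, hθ, Finset.sum_pi_single']
    simp
  · rw [← mulVec_mulVec, hθ, mulVec_single_one]

theorem col_injective_of_affineIndep [Fintype ι] [DecidableEq ι] {μ : Type*} [Ring R]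
    [Nontrivial R] {T : Matrix μ ι R}
    (hT : ∀ lam : ι → R, ∑ k, lam k = 0 → T *ᵥ lam = 0 → lam = 0) :
    Function.Injective T.col := by
  intro k l hkl
  by_contra hne
  have hlam := hT (Pi.single k 1 - Pi.single l 1)
    (by simp [Finset.sum_sub_distrib, Finset.sum_pi_single'])
    (by rw [mulVec_sub, mulVec_single_one, mulVec_single_one, hkl, sub_self])
  simpa [hne] using congrFun hlam k

end Matrix

theorem Function.Injective.exists_perm_of_forall_exists_eq {α β : Type*} [Finite α]
    {g h : α → β} (hg : g.Injective) (hgh : ∀ a, ∃ b, g a = h b) :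
    ∃ σ : Equiv.Perm α, ∀ a, g a = h (σ a) := by
  choose f hf using hgh
  have hf_inj : f.Injective := fun a b hab => hg (by rw [hf a, hf b, hab])
  exact ⟨Equiv.ofBijective f (Finite.injective_iff_bijective.mp hf_inj), hf⟩

theorem uniqueness_gives_permutation_general
    (m n r : ℕ) (D : Matrix (Fin m) (Fin n) ℝ)
    (T : Matrix (Fin m) (Fin r) ℝ)
    (huniq : {x : Fin m → ℝ | (∃ θ : Fin n → ℝ, ∑ j, θ j = 1 ∧ D.mulVec θ = x) ∧
        ∀ i, x i = 0 ∨ x i = 1} = {x | ∃ k : Fin r, x = fun i => T i k})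
    (T' : Matrix (Fin m) (Fin r) ℝ) (hT'bin : ∀ i k, T' i k = 0 ∨ T' i k = 1)
    (hT'aff : ∀ lam : Fin r → ℝ, ∑ k, lam k = 0 → T'.mulVec lam = 0 → lam = 0)
    (A' : Matrix (Fin r) (Fin n) ℝ)
    (hA'sum : ∀ j, ∑ k, A' k j = 1) (hA'rank : A'.rank = r)
    (hfac : D = T' * A') :
    ∃ σ : Equiv.Perm (Fin r), ∀ k, (fun i => T' i k) = fun i => T i (σ k) := by
  have hrank : A'.rank = Fintype.card (Fin r) := by rw [hA'rank, Fintype.card_fin]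
  have hcol_mem : ∀ k, T'.col k ∈ {x : Fin m → ℝ | (∃ θ : Fin n → ℝ, ∑ j, θ j = 1 ∧
      D.mulVec θ = x) ∧ ∀ i, x i = 0 ∨ x i = 1} := fun k =>
    ⟨hfac ▸ exists_sum_eq_one_mulVec_eq_col hA'sum hrank k, fun i => hT'bin i k⟩
  rw [huniq] at hcol_mem
  exact (col_injective_of_affineIndep hT'aff).exists_perm_of_forall_exists_eq hcol_mem

theorem uniqueness_gives_permutation
    (m n r : ℕ) (D : Matrix (Fin m) (Fin n) ℝ)
    (T : Matrix (Fin m) (Fin r) ℝ) (hTbin : ∀ i k, T i k = 0 ∨ T i k = 1)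
    (hTaff : ∀ lam : Fin r → ℝ, ∑ k, lam k = 0 → T.mulVec lam = 0 → lam = 0)
    (huniq : {x : Fin m → ℝ | (∃ θ : Fin n → ℝ, ∑ j, θ j = 1 ∧ D.mulVec θ = x) ∧
        ∀ i, x i = 0 ∨ x i = 1} = {x | ∃ k : Fin r, x = fun i => T i k})
    (T' : Matrix (Fin m) (Fin r) ℝ) (hT'bin : ∀ i k, T' i k = 0 ∨ T' i k = 1)
    (hT'aff : ∀ lam : Fin r → ℝ, ∑ k, lam k = 0 → T'.mulVec lam = 0 → lam = 0)
    (A' : Matrix (Fin r) (Fin n) ℝ) (hA'nn : ∀ k j, 0 ≤ A' k j)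
    (hA'sum : ∀ j, ∑ k, A' k j = 1) (hA'rank : A'.rank = r)
    (hfac : D = T' * A') :
    ∃ σ : Equiv.Perm (Fin r), ∀ k, (fun i => T' i k) = fun i => T i (σ k) :=
  uniqueness_gives_permutation_general m n r D T huniq T' hT'bin hT'aff A' hA'sum hA'rank hfac
end

section
/- Let T ∈ {0,1}^{m×r} and A ∈ ℝ^{r×n} with Aᵀ𝟙_r = 𝟙_n, and suppose the columns of T are affinely independent and rank(A) = r. Then rank([𝟙_nᵀ; D]) = r where D = TA, and A is the unique solution of the linear system [𝟙_rᵀ; T] X = [𝟙_nᵀ; D]. -/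
open Matrix

/- Since the columns of `A` sum to one, `[𝟙ᵀ; T] * A = [𝟙ᵀ; T * A]`. Affine independence of the
columns of `T` says exactly that `[𝟙ᵀ; T]` has trivial kernel, and left multiplication by a matrix
with trivial kernel preserves rank and can be cancelled. -/

namespace Matrix

variable {R : Type*} {k l n : Type*}

theorem rank_mul_eq_right_of_mulVec_injective [CommRing R] [Fintype k] [Fintype n]
    {S : Matrix l k R} (hS : Function.Injective S.mulVec) (B : Matrix k n R) :
    (S * B).rank = B.rank := by
  rw [rank, rank, mulVecLin_mul, LinearMap.range_comp,
    ← (Submodule.equivMapOfInjective S.mulVecLin hS _).finrank_eq]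

theorem mul_right_injective_of_mulVec_injective [CommSemiring R] [Fintype k] [Fintype n]
    {S : Matrix l k R} (hS : Function.Injective S.mulVec) :
    Function.Injective (fun X : Matrix k n R => S * X) := by
  intro X Y hXY
  refine ext_iff_mulVec.2 fun v => hS ?_
  simp only [mulVec_mulVec, hXY]

/-- The matrix written `[𝟙ᵀ; M]` in the paper. -/
def consOneRow [One R] {m : ℕ} (M : Matrix (Fin m) n R) : Matrix (Fin (m + 1)) n R :=
  of (Fin.cons (fun _ => 1) fun i => M i)

variable {m : ℕ}

theorem consOneRow_mulVec [CommSemiring R] [Fintype n] (M : Matrix (Fin m) n R) (v : n → R) :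
    consOneRow M *ᵥ v = vecCons (∑ j, v j) (M *ᵥ v) := by
  ext i
  refine Fin.cases ?_ (fun i => ?_) i <;> simp [consOneRow, mulVec, dotProduct]

theorem consOneRow_mul [CommSemiring R] [Fintype k] (T : Matrix (Fin m) k R)
    {A : Matrix k n R} (hA : ∀ j, ∑ i, A i j = 1) :
    consOneRow T * A = consOneRow (T * A) := by
  ext i j
  refine Fin.cases ?_ (fun i => ?_) i <;> simp [consOneRow, mul_apply, hA j]

theorem mulVec_injective_consOneRow_iff [CommRing R] [Fintype n] {M : Matrix (Fin m) n R} :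
    Function.Injective (consOneRow M).mulVec ↔ ∀ v : n → R, ∑ j, v j = 0 → M *ᵥ v = 0 → v = 0 := by
  rw [← coe_mulVecLin, ← LinearMap.ker_eq_bot, ker_mulVecLin_eq_bot_iff]
  simp only [consOneRow_mulVec, cons_eq_zero_iff, and_imp]

end Matrix

theorem stacked_system_unique_solution_general
    (m n r : ℕ) (T : Matrix (Fin m) (Fin r) ℝ)
    (hTaff : ∀ lam : Fin r → ℝ, ∑ k, lam k = 0 → T.mulVec lam = 0 → lam = 0)
    (A : Matrix (Fin r) (Fin n) ℝ) (hA : ∀ j, ∑ k, A k j = 1) (hrA : A.rank = r) :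
    (Matrix.of (Fin.cons (fun _ => (1 : ℝ)) (fun i => (T * A) i)) :
        Matrix (Fin (m + 1)) (Fin n) ℝ).rank = r ∧
    ∀ X : Matrix (Fin r) (Fin n) ℝ,
      ((Matrix.of (Fin.cons (fun _ => (1 : ℝ)) (fun i => T i)) :
          Matrix (Fin (m + 1)) (Fin r) ℝ) * X =
        Matrix.of (Fin.cons (fun _ => (1 : ℝ)) (fun i => (T * A) i)) ↔ X = A) := by
  have hS : Function.Injective (consOneRow T).mulVec := mulVec_injective_consOneRow_iff.2 hTaff
  have hSA : consOneRow T * A = consOneRow (T * A) := consOneRow_mul T hA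
  refine ⟨?_, fun X => ?_⟩
  · change (consOneRow (T * A)).rank = r
    rw [← hSA, rank_mul_eq_right_of_mulVec_injective hS, hrA]
  · change consOneRow T * X = consOneRow (T * A) ↔ X = A
    rw [← hSA]
    exact (mul_right_injective_of_mulVec_injective hS).eq_iff

theorem stacked_system_unique_solution
    (m n r : ℕ) (T : Matrix (Fin m) (Fin r) ℝ)
    (hTbin : ∀ i k, T i k = 0 ∨ T i k = 1)
    (hTaff : ∀ lam : Fin r → ℝ, ∑ k, lam k = 0 → T.mulVec lam = 0 → lam = 0)
    (A : Matrix (Fin r) (Fin n) ℝ) (hA : ∀ j, ∑ k, A k j = 1) (hrA : A.rank = r) :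
    (Matrix.of (Fin.cons (fun _ => (1 : ℝ)) (fun i => (T * A) i)) :
        Matrix (Fin (m + 1)) (Fin n) ℝ).rank = r ∧
    ∀ X : Matrix (Fin r) (Fin n) ℝ,
      ((Matrix.of (Fin.cons (fun _ => (1 : ℝ)) (fun i => T i)) :
          Matrix (Fin (m + 1)) (Fin r) ℝ) * X =
        Matrix.of (Fin.cons (fun _ => (1 : ℝ)) (fun i => (T * A) i)) ↔ X = A) :=
  stacked_system_unique_solution_general m n r T hTaff A hA hrA
end

section
/- Let V ⊆ ℝ^m be an affine subspace of affine dimension d. Then |V ∩ {0,1}^m| ≤ 2^d. -/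
/-!
Restrict the coordinate functionals to the direction `W` of `V`. A linearly independent
subfamily with the same span has at most `dim W` members, and a vector of `W` killed by it is
killed by every coordinate, so the restriction to those coordinates is injective on `W`, hence
on `V`. A vertex of the cube in `V` is thus determined by its `0/1` values on at most `d`
coordinates, which leaves at most `2 ^ d` vertices.
-/

open Module

theorem Submodule.exists_finset_card_le_finrank_eq_zero_of_forall_eq_zero
    {K ι : Type*} [Field K] (W : Submodule K (ι → K)) [FiniteDimensional K W] :
    ∃ s : Finset ι, s.card ≤ finrank K W ∧ ∀ w ∈ W, (∀ i ∈ s, w i = 0) → w = 0 := by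
  classical
  let coord : ι → Dual K W := fun i => LinearMap.proj i ∘ₗ W.subtype
  obtain ⟨κ, a, -, hspan, hli⟩ := exists_linearIndependent' K coord
  have : Fintype κ := @Fintype.ofFinite κ hli.finite
  refine ⟨Finset.univ.image a, ?_, fun w hw hs => ?_⟩
  · calc (Finset.univ.image a).card ≤ Fintype.card κ := Finset.card_image_le
      _ ≤ finrank K (Dual K W) := hli.fintype_card_le_finrank
      _ = finrank K W := Subspace.dual_finrank_eq
  · have hker : Submodule.span K (Set.range coord) ≤ LinearMap.ker (Dual.eval K W ⟨w, hw⟩) := by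
      rw [← hspan, Submodule.span_le]
      rintro _ ⟨k, rfl⟩
      exact hs (a k) (Finset.mem_image_of_mem a (Finset.mem_univ k))
    funext i
    exact hker (Submodule.subset_span ⟨i, rfl⟩)

theorem AffineSubspace.exists_finset_card_le_finrank_injOn_restrict
    {K ι : Type*} [Field K] (V : AffineSubspace K (ι → K)) [FiniteDimensional K V.direction] :
    ∃ s : Finset ι, s.card ≤ finrank K V.direction ∧ Set.InjOn s.restrict (V : Set (ι → K)) := by
  obtain ⟨s, hcard, hsep⟩ :=
    V.direction.exists_finset_card_le_finrank_eq_zero_of_forall_eq_zero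
  refine ⟨s, hcard, fun x hx y hy hxy => sub_eq_zero.mp ?_⟩
  refine hsep (x - y) (V.vsub_mem_direction hx hy) fun i hi => ?_
  simpa [sub_eq_zero] using congrFun hxy ⟨i, hi⟩

theorem Set.ncard_le_card_pow_of_injOn_restrict {ι α : Type*} {A : Set (ι → α)}
    {s : Finset ι} {B : Finset α} (hB : ∀ x ∈ A, ∀ i ∈ s, x i ∈ B)
    (hinj : Set.InjOn s.restrict A) :
    A.ncard ≤ B.card ^ s.card := by
  classical
  calc A.ncard ≤ (Fintype.piFinset fun _ : s => B : Set (s → α)).ncard :=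
        Set.ncard_le_ncard_of_injOn _ (fun x hx => by simpa using fun i hi => hB x hx i hi) hinj
    _ = B.card ^ s.card := by
        rw [Set.ncard_coe_finset, Fintype.card_piFinset, Finset.prod_const, Finset.card_univ,
          Fintype.card_coe]

theorem affine_subspace_cube_vertices_bound_general
    (m d : ℕ) (V : AffineSubspace ℝ (Fin m → ℝ))
    (hdim : Module.finrank ℝ V.direction = d) :
    {x : Fin m → ℝ | x ∈ V ∧ ∀ i, x i = 0 ∨ x i = 1}.ncard ≤ 2 ^ d := by
  obtain ⟨s, hcard, hinj⟩ := V.exists_finset_card_le_finrank_injOn_restrict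
  calc _ ≤ ({0, 1} : Finset ℝ).card ^ s.card :=
        Set.ncard_le_card_pow_of_injOn_restrict (fun x hx i _ => by simpa using hx.2 i)
          (hinj.mono fun x hx => hx.1)
    _ = 2 ^ s.card := by rw [Finset.card_pair zero_ne_one]
    _ ≤ 2 ^ d := hdim ▸ Nat.pow_le_pow_right two_pos hcard

theorem affine_subspace_cube_vertices_bound
    (m d : ℕ) (V : AffineSubspace ℝ (Fin m → ℝ))
    (hne : (V : Set (Fin m → ℝ)).Nonempty)
    (hdim : Module.finrank ℝ V.direction = d) :
    {x : Fin m → ℝ | x ∈ V ∧ ∀ i, x i = 0 ∨ x i = 1}.ncard ≤ 2 ^ d :=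
  affine_subspace_cube_vertices_bound_general m d V hdim
end
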